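/- arXiv:2003.13897 — 8 statements merged into one kernel-verified Lean document; each statement's English description precedes it below -/
import Mathlib

section
/- Let U_C(CC), U_C(CD), U_C(DC), U_C(DD) be real numbers, let e2 ∈ [0,1), and set D1 = U_C(CC) − U_C(DD) − e2·(U_C(CC) − U_C(DC)); assume D1 ≠ 0. Suppose real numbers p1, p2, p3, p4, β, γ satisfy the four pinning equations: p1 − 1 = β·U_C(CC) + γ; e2·p1 + (1 − e2)·p2 − 1 = β·U_C(CD) + γ; p3 = β·U_C(DC) + γ; e2·p3 + (1 − e2)·p4 = β·U_C(DD) + γ. Then necessarily p2 = (1/D1)·{[U_C(CD) − U_C(DD) + e2·(U_C(DC) − U_C(CC))]·p1 + [U_C(CC) − U_C(CD)]·(1 + p4)} and p3 = (1/D1)·{[U_C(DD) − U_C(DC)]·(1 − p1) + [U_C(CC) − U_C(DC)]·(1 − e2)·p4}. -/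
/-- Uniqueness part of the pinning analysis: the pinning equations force the stated
expressions for `p2` and `p3`. -/
theorem pinning_NSZD_p2_p3
    (uCC uCD uDC uDD e2 : ℝ) (he2 : 0 ≤ e2 ∧ e2 < 1)
    (D1 : ℝ) (hD1 : D1 = uCC - uDD - e2 * (uCC - uDC)) (hD1ne : D1 ≠ 0)
    (p1 p2 p3 p4 β γ : ℝ)
    (h1 : p1 - 1 = β * uCC + γ)
    (h2 : e2 * p1 + (1 - e2) * p2 - 1 = β * uCD + γ)
    (h3 : p3 = β * uDC + γ)
    (h4 : e2 * p3 + (1 - e2) * p4 = β * uDD + γ) :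
    p2 = (1 / D1) * ((uCD - uDD + e2 * (uDC - uCC)) * p1 + (uCC - uCD) * (1 + p4)) ∧
    p3 = (1 / D1) * ((uDD - uDC) * (1 - p1) + (uCC - uDC) * (1 - e2) * p4) := by
  have he : (1 - e2) ≠ 0 := by
    have := he2.2; intro h; linarith [he2.2]
  have key3 : p3 * D1 = (uDD - uDC) * (1 - p1) + (uCC - uDC) * (1 - e2) * p4 := by
    rw [hD1]
    linear_combination (uDD - uDC) * h1 + (uCC - uDD) * h3 + (uDC - uCC) * h4
  have key2 : p2 * D1 = (uCD - uDD + e2 * (uDC - uCC)) * p1 + (uCC - uCD) * (1 + p4) := by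
    apply mul_left_cancel₀ he
    rw [hD1]
    linear_combination
      (-(1 - e2) * (uCD - uDD + e2 * (uDC - uCC)) - e2 * (uCC - uDD - e2 * (uCC - uDC))) * h1 +
      (uCC - uDD - e2 * (uCC - uDC)) * h2 + e2 * (uCC - uCD) * h3 + (uCD - uCC) * h4
  constructor
  · field_simp
    linarith [key2]
  · field_simp
    linarith [key3]
end

section
/- Let A, B be real numbers with A < B and define S_C(p1, p4) = (A·(1 − p1) + B·p4)/(1 − p1 + p4). Then S_C is strictly increasing in each argument on the region 0 ≤ p1 < 1, 0 < p4 ≤ 1: if 0 ≤ p1 < p1' < 1 and 0 < p4 ≤ 1 then S_C(p1, p4) < S_C(p1', p4), and if 0 ≤ p1 < 1 and 0 < p4 < p4' ≤ 1 then S_C(p1, p4) < S_C(p1, p4'). (Theorem 2: when p4 ≠ 0 and p1 ≠ 1, the pinned expected payoff of the data collector increases as p1 or p4 increases.) -/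
/-!
`S_C(p1, p4)` is the weighted average of `A` and `B` with positive weights `1 - p1` and `p4`.
Such an average strictly increases when the weight of the larger value `B` grows or the weight of
the smaller value `A` shrinks; cross-multiplying, each difference is `(B - A)` times a product of
positive factors.
-/

section WeightedAverage

variable {a b x x' y y' : ℝ}

lemma weighted_average_lt_of_right_weight_lt (hab : a < b) (hx : 0 < x) (hy : 0 < y)
    (hyy' : y < y') : (a * x + b * y) / (x + y) < (a * x + b * y') / (x + y') := by
  rw [div_lt_div_iff₀ (by linarith) (by linarith)]
  nlinarith [mul_pos (mul_pos (sub_pos.2 hab) hx) (sub_pos.2 hyy')]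

lemma weighted_average_lt_of_left_weight_lt (hab : a < b) (hx' : 0 < x') (hy : 0 < y)
    (hx'x : x' < x) : (a * x + b * y) / (x + y) < (a * x' + b * y) / (x' + y) := by
  rw [div_lt_div_iff₀ (by linarith) (by linarith)]
  nlinarith [mul_pos (mul_pos (sub_pos.2 hab) hy) (sub_pos.2 hx'x)]

end WeightedAverage

/-- Theorem 2: when `A < B`, the pinned payoff
`S_C(p1,p4) = (A(1-p1)+B·p4)/(1-p1+p4)` is strictly increasing in each argument
on the region `0 ≤ p1 < 1`, `0 < p4 ≤ 1`. -/
theorem pinned_payoff_monotone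
    (A B : ℝ) (hAB : A < B)
    (S : ℝ → ℝ → ℝ)
    (hS : ∀ p1 p4, S p1 p4 = (A * (1 - p1) + B * p4) / (1 - p1 + p4)) :
    (∀ p1 p1' p4 : ℝ, 0 ≤ p1 → p1 < p1' → p1' < 1 → 0 < p4 → p4 ≤ 1 →
      S p1 p4 < S p1' p4) ∧
    (∀ p1 p4 p4' : ℝ, 0 ≤ p1 → p1 < 1 → 0 < p4 → p4 < p4' → p4' ≤ 1 →
      S p1 p4 < S p1 p4') := by
  constructor
  · intro p1 p1' p4 _ hp1p1' hp1' hp4 _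
    rw [hS, hS]
    exact weighted_average_lt_of_left_weight_lt hAB (by linarith) hp4 (by linarith)
  · intro p1 p4 p4' _ hp1 hp4 hp4p4' _
    rw [hS, hS]
    exact weighted_average_lt_of_right_weight_lt hAB (by linarith) hp4 hp4p4'
end

section
/- Fix constants C_C > 0, C_{C1} > 0, C_{C2} > 0, e2 ∈ [0,1), and p1 ∈ [0,1), p4 ∈ [0,1]. Define A(e1) = ((1 − e1)·C_C + (1 − e1)·C_{C1} − (1 − e2)·C_{C2} − e2·(1 − e1)·C_C)/(1 − e2) and S_C(e1) = ((1 − p1)·A(e1) + p4·C_C)/(1 − p1 + p4). Then for every e1 the derivative of S_C with respect to e1 equals −((1 − p1)/(1 − p1 + p4))·((1 − e2)·C_C + C_{C1})/(1 − e2), which is strictly negative; consequently S_C is strictly decreasing in the noise e1. (Theorem 3, first part.) -/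
/-- Theorem 3 (first part): the pinned payoff `S_C` is strictly decreasing in the
noise `e1`, with derivative `-((1-p1)/(1-p1+p4))·((1-e2)·C_C + C_{C1})/(1-e2)`. -/
theorem pinned_payoff_decreasing_in_e1
    (CC CC1 CC2 e2 p1 p4 : ℝ)
    (hCC : 0 < CC) (hCC1 : 0 < CC1) (hCC2 : 0 < CC2)
    (he2 : 0 ≤ e2 ∧ e2 < 1) (hp1 : 0 ≤ p1 ∧ p1 < 1) (hp4 : 0 ≤ p4 ∧ p4 ≤ 1)
    (A : ℝ → ℝ)
    (hA : ∀ e1, A e1 = ((1 - e1) * CC + (1 - e1) * CC1 - (1 - e2) * CC2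
        - e2 * ((1 - e1) * CC)) / (1 - e2))
    (S : ℝ → ℝ)
    (hS : ∀ e1, S e1 = ((1 - p1) * A e1 + p4 * CC) / (1 - p1 + p4)) :
    (∀ e1 : ℝ,
      HasDerivAt S (-((1 - p1) / (1 - p1 + p4)) * (((1 - e2) * CC + CC1) / (1 - e2))) e1 ∧
      -((1 - p1) / (1 - p1 + p4)) * (((1 - e2) * CC + CC1) / (1 - e2)) < 0) ∧
    StrictAntiOn S Set.univ := by
  obtain ⟨he2a, he2b⟩ := he2
  obtain ⟨hp1a, hp1b⟩ := hp1
  obtain ⟨hp4a, hp4b⟩ := hp4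
  have h2 : (0:ℝ) < 1 - e2 := by linarith
  have hden : (0:ℝ) < 1 - p1 + p4 := by linarith
  set m : ℝ := -((1 - p1) / (1 - p1 + p4)) * (((1 - e2) * CC + CC1) / (1 - e2)) with hm
  have hmneg : m < 0 := by
    rw [hm]
    have h1 : 0 < (1 - p1) / (1 - p1 + p4) := div_pos (by linarith) hden
    have h3 : 0 < ((1 - e2) * CC + CC1) / (1 - e2) :=
      div_pos (by positivity) h2
    nlinarith
  have hSeq : S = fun e1 => m * e1 + S 0 := by
    funext x
    rw [hS, hS, hA, hA, hm]
    field_simp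
    ring
  constructor
  · intro e1
    refine ⟨?_, hmneg⟩
    have : HasDerivAt (fun e1 => m * e1 + S 0) m e1 := by
      simpa using ((hasDerivAt_id e1).const_mul m).add_const (S 0)
    rw [hSeq]; exact this
  · intro a _ b _ hab
    rw [hSeq]
    simp only
    nlinarith
end

section
/- Fix constants C_C > 0, C_{C1} > 0, C_{C2} > 0, e1 ∈ [0,1), and p1 ∈ [0,1), p4 ∈ [0,1]. Define A(e2) = ((1 − e1)·C_C + (1 − e1)·C_{C1} − (1 − e2)·C_{C2} − e2·(1 − e1)·C_C)/(1 − e2) and S_C(e2) = ((1 − p1)·A(e2) + p4·C_C)/(1 − p1 + p4). Then for every e2 ∈ [0,1) the derivative of S_C with respect to e2 equals ((1 − p1)/(1 − p1 + p4))·(1 − e1)·C_{C1}/(1 − e2)^2, which is strictly positive; consequently S_C is strictly increasing in the noise e2 on [0,1). (Theorem 3, second part.) -/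
/-! Clearing the denominator shows that, away from `e2 = 1`, the payoff has the form
`S e2 = c + β / (1 - e2)` with `β = (1 - p1) / (1 - p1 + p4) · (1 - e1) · C_{C1} > 0`
(the `C_{C2}` and `C_C` terms are constant in `e2`). Such a function has derivative
`β / (1 - e2)^2` and is strictly increasing on `(-∞, 1)`. -/

open Set Filter

theorem hasDerivAt_const_add_div_one_sub (c d : ℝ) {x : ℝ} (hx : x ≠ 1) :
    HasDerivAt (fun y => c + d / (1 - y)) (d / (1 - x) ^ 2) x := by
  have hsub : (1 : ℝ) - x ≠ 0 := sub_ne_zero.mpr hx.symm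
  have h := ((hasDerivAt_const x d).div ((hasDerivAt_id x).const_sub 1) hsub).const_add c
  simp only [id_eq] at h
  exact h.congr_deriv (by simp)

theorem strictMonoOn_const_add_div_one_sub (c : ℝ) {d : ℝ} (hd : 0 < d) :
    StrictMonoOn (fun y => c + d / (1 - y)) (Iio 1) := by
  intro x _ y hy hxy
  have hy' : 0 < 1 - y := sub_pos.mpr hy
  simp only [add_lt_add_iff_left]
  exact div_lt_div_of_pos_left hd hy' (by linarith)

theorem pinned_payoff_increasing_in_e2_general
    (CC CC1 CC2 e1 p1 p4 : ℝ)
    (hCC1 : 0 < CC1)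
    (he1 : 0 ≤ e1 ∧ e1 < 1) (hp1 : 0 ≤ p1 ∧ p1 < 1) (hp4 : 0 ≤ p4 ∧ p4 ≤ 1)
    (A : ℝ → ℝ)
    (hA : ∀ e2, A e2 = ((1 - e1) * CC + (1 - e1) * CC1 - (1 - e2) * CC2
        - e2 * ((1 - e1) * CC)) / (1 - e2))
    (S : ℝ → ℝ)
    (hS : ∀ e2, S e2 = ((1 - p1) * A e2 + p4 * CC) / (1 - p1 + p4)) :
    (∀ e2 : ℝ, 0 ≤ e2 → e2 < 1 →
      HasDerivAt S (((1 - p1) / (1 - p1 + p4)) * ((1 - e1) * CC1 / (1 - e2) ^ 2)) e2 ∧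
      0 < ((1 - p1) / (1 - p1 + p4)) * ((1 - e1) * CC1 / (1 - e2) ^ 2)) ∧
    StrictMonoOn S (Set.Ico (0 : ℝ) 1) := by
  have hp1' : 0 < 1 - p1 := sub_pos.mpr hp1.2
  have hden : 0 < 1 - p1 + p4 := by linarith [hp4.1]
  have he1' : 0 < 1 - e1 := sub_pos.mpr he1.2
  set β := (1 - p1) / (1 - p1 + p4) * ((1 - e1) * CC1)
  have hβ : 0 < β := by positivity
  set f : ℝ → ℝ := fun y => ((1 - p1) * ((1 - e1) * CC - CC2) + p4 * CC) / (1 - p1 + p4)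
    + β / (1 - y)
  have hSf : EqOn S f (Iio 1) := by
    intro y (hy : y < 1)
    have : 1 - y ≠ 0 := by linarith
    simp only [f, β, hS, hA]
    field_simp
    ring
  have hderiv (x : ℝ) (hx : x < 1) : HasDerivAt S (β / (1 - x) ^ 2) x :=
    (hasDerivAt_const_add_div_one_sub _ _ hx.ne).congr_of_eventuallyEq
      (eventually_of_mem (Iio_mem_nhds hx) hSf)
  refine ⟨fun e2 _ he2 => ?_, ?_⟩
  · have : 0 < 1 - e2 := sub_pos.mpr he2
    rw [← mul_div_assoc]
    exact ⟨hderiv e2 he2, by positivity⟩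
  · exact ((strictMonoOn_const_add_div_one_sub _ hβ).congr hSf.symm).mono
      fun x hx => hx.2

/-- Theorem 3 (second part): the pinned payoff `S_C` is strictly increasing in the
noise `e2` on `[0,1)`, with derivative
`((1-p1)/(1-p1+p4))·(1-e1)·C_{C1}/(1-e2)^2`. -/
theorem pinned_payoff_increasing_in_e2
    (CC CC1 CC2 e1 p1 p4 : ℝ)
    (hCC : 0 < CC) (hCC1 : 0 < CC1) (hCC2 : 0 < CC2)
    (he1 : 0 ≤ e1 ∧ e1 < 1) (hp1 : 0 ≤ p1 ∧ p1 < 1) (hp4 : 0 ≤ p4 ∧ p4 ≤ 1)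
    (A : ℝ → ℝ)
    (hA : ∀ e2, A e2 = ((1 - e1) * CC + (1 - e1) * CC1 - (1 - e2) * CC2
        - e2 * ((1 - e1) * CC)) / (1 - e2))
    (S : ℝ → ℝ)
    (hS : ∀ e2, S e2 = ((1 - p1) * A e2 + p4 * CC) / (1 - p1 + p4)) :
    (∀ e2 : ℝ, 0 ≤ e2 → e2 < 1 →
      HasDerivAt S (((1 - p1) / (1 - p1 + p4)) * ((1 - e1) * CC1 / (1 - e2) ^ 2)) e2 ∧
      0 < ((1 - p1) / (1 - p1 + p4)) * ((1 - e1) * CC1 / (1 - e2) ^ 2)) ∧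
    StrictMonoOn S (Set.Ico (0 : ℝ) 1) :=
  pinned_payoff_increasing_in_e2_general CC CC1 CC2 e1 p1 p4 hCC1 he1 hp1 hp4 A hA S hS
end

section
/- Let U_P(CC), U_P(CD), U_P(DC), U_P(DD), U_C(CC), U_C(CD), U_C(DC), U_C(DD), l1, l2 be real numbers with U_C(CC) − l2 > 0 and U_C(DD) − l2 > 0. Suppose φ > 0 and χ > 1 are real numbers such that the four feasibility inequalities hold: 0 ≤ φ·[U_P(CC) − l1 − χ·(U_C(CC) − l2)] + 1 ≤ 1; 0 ≤ φ·[U_P(CD) − l1 − χ·(U_C(CD) − l2)] + 1 ≤ 1; 0 ≤ φ·[U_P(DC) − l1 − χ·(U_C(DC) − l2)] ≤ 1; 0 ≤ φ·[U_P(DD) − l1 − χ·(U_C(DD) − l2)] ≤ 1. Then (U_P(CC) − l1)/(U_C(CC) − l2) ≤ χ ≤ (U_P(DD) − l1)/(U_C(DD) − l2); in particular (U_P(DD) − l1)/(U_C(DD) − l2) ≥ (U_P(CC) − l1)/(U_C(CC) − l2) and (U_P(DD) − l1)/(U_C(DD) − l2) > 1. (Theorem 4, case φ > 0.) -/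
/-!
Since `φ > 0`, the upper bound of the `CC` constraint and the lower bound of the `DD` constraint
say that `U_P(CC) - l1 - χ (U_C(CC) - l2) ≤ 0 ≤ U_P(DD) - l1 - χ (U_C(DD) - l2)`; dividing by the
positive collector surpluses `U_C(CC) - l2` and `U_C(DD) - l2` sandwiches `χ > 1` between the
two ratios.
-/

lemma div_le_of_mul_sub_mul_nonpos {φ a c χ : ℝ} (hφ : 0 < φ) (hc : 0 < c)
    (h : φ * (a - χ * c) ≤ 0) : a / c ≤ χ := by
  have : a - χ * c ≤ 0 := nonpos_of_mul_nonpos_right h hφ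
  rw [div_le_iff₀ hc]
  linarith

lemma le_div_of_mul_sub_mul_nonneg {φ a c χ : ℝ} (hφ : 0 < φ) (hc : 0 < c)
    (h : 0 ≤ φ * (a - χ * c)) : χ ≤ a / c := by
  have : 0 ≤ a - χ * c := nonneg_of_mul_nonneg_right h hφ
  rw [le_div_iff₀ hc]
  linarith

theorem extortion_feasibility_pos_phi_general
    (uPCC uPDD uCCC uCDD l1 l2 : ℝ)
    (hCC : 0 < uCCC - l2) (hDD : 0 < uCDD - l2)
    (φ χ : ℝ) (hφ : 0 < φ) (hχ : 1 < χ)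
    (h1 : 0 ≤ φ * (uPCC - l1 - χ * (uCCC - l2)) + 1 ∧
          φ * (uPCC - l1 - χ * (uCCC - l2)) + 1 ≤ 1)
    (h4 : 0 ≤ φ * (uPDD - l1 - χ * (uCDD - l2)) ∧
          φ * (uPDD - l1 - χ * (uCDD - l2)) ≤ 1) :
    ((uPCC - l1) / (uCCC - l2) ≤ χ ∧ χ ≤ (uPDD - l1) / (uCDD - l2)) ∧
    (uPCC - l1) / (uCCC - l2) ≤ (uPDD - l1) / (uCDD - l2) ∧
    1 < (uPDD - l1) / (uCDD - l2) := by
  have hlow : (uPCC - l1) / (uCCC - l2) ≤ χ :=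
    div_le_of_mul_sub_mul_nonpos hφ hCC (by linarith [h1.2])
  have hhigh : χ ≤ (uPDD - l1) / (uCDD - l2) := le_div_of_mul_sub_mul_nonneg hφ hDD h4.1
  exact ⟨⟨hlow, hhigh⟩, hlow.trans hhigh, hχ.trans_le hhigh⟩

/-- Theorem 4, case `φ > 0`: the feasibility inequalities force
`(U_P(CC)-l1)/(U_C(CC)-l2) ≤ χ ≤ (U_P(DD)-l1)/(U_C(DD)-l2)`. -/
theorem extortion_feasibility_pos_phi
    (uPCC uPCD uPDC uPDD uCCC uCCD uCDC uCDD l1 l2 : ℝ)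
    (hCC : 0 < uCCC - l2) (hDD : 0 < uCDD - l2)
    (φ χ : ℝ) (hφ : 0 < φ) (hχ : 1 < χ)
    (h1 : 0 ≤ φ * (uPCC - l1 - χ * (uCCC - l2)) + 1 ∧
          φ * (uPCC - l1 - χ * (uCCC - l2)) + 1 ≤ 1)
    (h2 : 0 ≤ φ * (uPCD - l1 - χ * (uCCD - l2)) + 1 ∧
          φ * (uPCD - l1 - χ * (uCCD - l2)) + 1 ≤ 1)
    (h3 : 0 ≤ φ * (uPDC - l1 - χ * (uCDC - l2)) ∧
          φ * (uPDC - l1 - χ * (uCDC - l2)) ≤ 1)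
    (h4 : 0 ≤ φ * (uPDD - l1 - χ * (uCDD - l2)) ∧
          φ * (uPDD - l1 - χ * (uCDD - l2)) ≤ 1) :
    ((uPCC - l1) / (uCCC - l2) ≤ χ ∧ χ ≤ (uPDD - l1) / (uCDD - l2)) ∧
    (uPCC - l1) / (uCCC - l2) ≤ (uPDD - l1) / (uCDD - l2) ∧
    1 < (uPDD - l1) / (uCDD - l2) :=
  extortion_feasibility_pos_phi_general uPCC uPDD uCCC uCDD l1 l2 hCC hDD φ χ hφ hχ h1 h4
end

section
/- Let U_P(CC), U_P(CD), U_P(DC), U_P(DD), U_C(CC), U_C(CD), U_C(DC), U_C(DD), l1, l2 be real numbers with U_C(CD) − l2 > 0 and U_C(DC) − l2 > 0. Suppose φ < 0 and χ > 1 are real numbers such that the four feasibility inequalities hold: 0 ≤ φ·[U_P(CC) − l1 − χ·(U_C(CC) − l2)] + 1 ≤ 1; 0 ≤ φ·[U_P(CD) − l1 − χ·(U_C(CD) − l2)] + 1 ≤ 1; 0 ≤ φ·[U_P(DC) − l1 − χ·(U_C(DC) − l2)] ≤ 1; 0 ≤ φ·[U_P(DD) − l1 − χ·(U_C(DD) −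 l2)] ≤ 1. Then (U_P(DC) − l1)/(U_C(DC) − l2) ≤ χ ≤ (U_P(CD) − l1)/(U_C(CD) − l2); in particular (U_P(CD) − l1)/(U_C(CD) − l2) ≥ (U_P(DC) − l1)/(U_C(DC) − l2) and (U_P(CD) − l1)/(U_C(CD) − l2) > 1. (Theorem 4, case φ < 0.) -/
/-! Since `φ < 0`, the upper bound on the `CD` component and the lower bound on the `DC` component
fix the signs of the brackets `U_P − l1 − χ (U_C − l2)` in those two states, and dividing by the
positive `U_C − l2` turns each sign into a comparison of `χ` with the ratio `(U_P − l1) / (U_C − l2)`. -/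

section

variable {K : Type*} [Field K] [LinearOrder K] [IsStrictOrderedRing K] {φ χ a d : K}

theorem le_div_of_neg_mul_sub_add_one_le_one (hφ : φ < 0) (hd : 0 < d)
    (h : φ * (a - χ * d) + 1 ≤ 1) : χ ≤ a / d := by
  have hbracket : 0 ≤ a - χ * d := nonneg_of_mul_nonpos_right (by linarith) hφ
  rw [le_div_iff₀ hd]
  linarith

theorem div_le_of_neg_mul_sub_nonneg (hφ : φ < 0) (hd : 0 < d)
    (h : 0 ≤ φ * (a - χ * d)) : a / d ≤ χ := by
  have hbracket : a - χ * d ≤ 0 := nonpos_of_mul_nonneg_right h hφ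
  rw [div_le_iff₀ hd]
  linarith

end

theorem extortion_feasibility_neg_phi_general
    (uPCD uPDC uCCD uCDC l1 l2 : ℝ)
    (hCD : 0 < uCCD - l2) (hDC : 0 < uCDC - l2)
    (φ χ : ℝ) (hφ : φ < 0) (hχ : 1 < χ)
    (h2 : 0 ≤ φ * (uPCD - l1 - χ * (uCCD - l2)) + 1 ∧
          φ * (uPCD - l1 - χ * (uCCD - l2)) + 1 ≤ 1)
    (h3 : 0 ≤ φ * (uPDC - l1 - χ * (uCDC - l2)) ∧
          φ * (uPDC - l1 - χ * (uCDC - l2)) ≤ 1) :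
    ((uPDC - l1) / (uCDC - l2) ≤ χ ∧ χ ≤ (uPCD - l1) / (uCCD - l2)) ∧
    (uPDC - l1) / (uCDC - l2) ≤ (uPCD - l1) / (uCCD - l2) ∧
    1 < (uPCD - l1) / (uCCD - l2) := by
  have hle : (uPDC - l1) / (uCDC - l2) ≤ χ := div_le_of_neg_mul_sub_nonneg hφ hDC h3.1
  have hge : χ ≤ (uPCD - l1) / (uCCD - l2) := le_div_of_neg_mul_sub_add_one_le_one hφ hCD h2.2
  exact ⟨⟨hle, hge⟩, hle.trans hge, hχ.trans_le hge⟩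

/-- Theorem 4, case `φ < 0`: the feasibility inequalities force
`(U_P(DC)-l1)/(U_C(DC)-l2) ≤ χ ≤ (U_P(CD)-l1)/(U_C(CD)-l2)`. -/
theorem extortion_feasibility_neg_phi
    (uPCC uPCD uPDC uPDD uCCC uCCD uCDC uCDD l1 l2 : ℝ)
    (hCD : 0 < uCCD - l2) (hDC : 0 < uCDC - l2)
    (φ χ : ℝ) (hφ : φ < 0) (hχ : 1 < χ)
    (h1 : 0 ≤ φ * (uPCC - l1 - χ * (uCCC - l2)) + 1 ∧
          φ * (uPCC - l1 - χ * (uCCC - l2)) + 1 ≤ 1)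
    (h2 : 0 ≤ φ * (uPCD - l1 - χ * (uCCD - l2)) + 1 ∧
          φ * (uPCD - l1 - χ * (uCCD - l2)) + 1 ≤ 1)
    (h3 : 0 ≤ φ * (uPDC - l1 - χ * (uCDC - l2)) ∧
          φ * (uPDC - l1 - χ * (uCDC - l2)) ≤ 1)
    (h4 : 0 ≤ φ * (uPDD - l1 - χ * (uCDD - l2)) ∧
          φ * (uPDD - l1 - χ * (uCDD - l2)) ≤ 1) :
    ((uPDC - l1) / (uCDC - l2) ≤ χ ∧ χ ≤ (uPCD - l1) / (uCCD - l2)) ∧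
    (uPDC - l1) / (uCDC - l2) ≤ (uPCD - l1) / (uCCD - l2) ∧
    1 < (uPCD - l1) / (uCCD - l2) :=
  extortion_feasibility_neg_phi_general uPCD uPDC uCCD uCDC l1 l2 hCD hDC φ χ hφ hχ h2 h3
end

section
/- Let C_P, C_{P1}, C_{P2} > 0 and e2 ∈ [0,1] be real numbers with C_{P1} > (1 − e2)·C_{P2}, and set U_P(CC) = C_P and U_P(CD) = C_P − C_{P1} + (1 − e2)·C_{P2} (so that U_P(CC) > U_P(CD)). Then there exist no real numbers α and γ with α ≠ 0 such that both α·U_P(CC) + γ = 0 and α·U_P(CD) + γ = 0. (Hence the data collector cannot adopt the pinning NSZD strategy in the data trading game: the first two equations of the required system 0 = α·U_P(CC) + γ, 0 = α·U_P(CD) + γ cannot hold simultaneously.) -/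
/-- Theorem 5: the data collector cannot adopt the pinning NSZD strategy, since the
first two equations `0 = α·U_P(CC) + γ` and `0 = α·U_P(CD) + γ` cannot hold with
`α ≠ 0` when `U_P(CC) > U_P(CD)`. -/
theorem collector_cannot_pin
    (CP CP1 CP2 e2 : ℝ)
    (hCP : 0 < CP) (hCP1 : 0 < CP1) (hCP2 : 0 < CP2)
    (he2 : 0 ≤ e2 ∧ e2 ≤ 1)
    (hgt : CP1 > (1 - e2) * CP2)
    (uPCC uPCD : ℝ)
    (hCC : uPCC = CP) (hCD : uPCD = CP - CP1 + (1 - e2) * CP2) :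
    ¬ ∃ α γ : ℝ, α ≠ 0 ∧ α * uPCC + γ = 0 ∧ α * uPCD + γ = 0 := by
  rintro ⟨α, γ, hα, h1, h2⟩
  have : α * (uPCC - uPCD) = 0 := by ring_nf; linarith
  have hne : uPCC - uPCD ≠ 0 := by rw [hCC, hCD]; nlinarith
  exact hα (by rcases mul_eq_zero.mp this with h | h; exact h; exact absurd h hne)
end

section
/- Let C_P, C_{P1}, C_{P2}, C_C, C_{C1}, C_{C2} > 0 and e2 ∈ [0,1] be real numbers with C_{P1} > (1 − e2)·C_{P2} and C_{C1} > (1 − e2)·C_{C2}, and set U_P(CC) = C_P, U_P(CD) = C_P − C_{P1} + (1 − e2)·C_{P2}, U_C(CC) = C_C, U_C(CD) = C_C + C_{C1} − (1 − e2)·C_{C2} (so that U_P(CC) > U_P(CD) and U_C(CD) > U_C(CC)). Then for any real numbers l1, l2, φ, χ, if 0 = φ·[U_P(CC) − l1 − χ·(U_C(CC) − l2)] + 1 and 0 = φ·[U_P(CD) − l1 − χ·(U_C(CD) − l2)] + 1 both hold, then χ < 0; in particular there is no extortion factor χ > 1 for which these two equations are simultaneously satisfiable. (Hence the data collector cannot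 adopt the extortionate NSZD strategy in the data trading game.) -/
/-- Theorem 6: the data collector cannot adopt the extortionate NSZD strategy:
any `φ, χ` solving the first two component equations satisfy `χ < 0`, so no
extortion factor `χ > 1` exists. -/
theorem collector_cannot_extort
    (CP CP1 CP2 CC CC1 CC2 e2 : ℝ)
    (hCP : 0 < CP) (hCP1 : 0 < CP1) (hCP2 : 0 < CP2)
    (hCC : 0 < CC) (hCC1 : 0 < CC1) (hCC2 : 0 < CC2)
    (he2 : 0 ≤ e2 ∧ e2 ≤ 1)
    (hP : CP1 > (1 - e2) * CP2) (hC : CC1 > (1 - e2) * CC2)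
    (uPCC uPCD uCCC uCCD : ℝ)
    (h1 : uPCC = CP) (h2 : uPCD = CP - CP1 + (1 - e2) * CP2)
    (h3 : uCCC = CC) (h4 : uCCD = CC + CC1 - (1 - e2) * CC2) :
    (∀ l1 l2 φ χ : ℝ,
      0 = φ * (uPCC - l1 - χ * (uCCC - l2)) + 1 →
      0 = φ * (uPCD - l1 - χ * (uCCD - l2)) + 1 →
      χ < 0) ∧
    ¬ ∃ l1 l2 φ χ : ℝ, χ > 1 ∧
      0 = φ * (uPCC - l1 - χ * (uCCC - l2)) + 1 ∧
      0 = φ * (uPCD - l1 - χ * (uCCD - l2)) + 1 := by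
  have main : ∀ l1 l2 φ χ : ℝ,
      0 = φ * (uPCC - l1 - χ * (uCCC - l2)) + 1 →
      0 = φ * (uPCD - l1 - χ * (uCCD - l2)) + 1 →
      χ < 0 := by
    subst h1 h2 h3 h4
    intro l1 l2 φ χ ha hb
    have hφ : φ ≠ 0 := by
      rintro rfl; simp at ha
    have hsub : φ * ((CP1 - (1 - e2) * CP2) + χ * (CC1 - (1 - e2) * CC2)) = 0 := by
      nlinarith [ha, hb]
    have hz : (CP1 - (1 - e2) * CP2) + χ * (CC1 - (1 - e2) * CC2) = 0 :=
      (mul_eq_zero.mp hsub).resolve_left hφ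
    have hA : 0 < CP1 - (1 - e2) * CP2 := by linarith
    have hB : 0 < CC1 - (1 - e2) * CC2 := by linarith
    nlinarith
  refine ⟨main, ?_⟩
  rintro ⟨l1, l2, φ, χ, hχ, ha, hb⟩
  have := main l1 l2 φ χ ha hb
  linarith
end
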